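/- arXiv:2304.02551 — 7 statements merged into one kernel-verified Lean document; each statement's English description precedes it below -/
import Mathlib

section
/- Let G be a finite cyclic group generated by σ, M a finitely generated Z_p[G]-module with H¹(G,M) = 0, and L ⊆ M a submodule with N(L) = N(M), where N is the norm element of Z_p[G]. Then L = M. -/
/-!
Since `(1 - σ)^(p^n) ≡ 1 - σ^(p^n) = 0 (mod p)` and `ℤ_[p][G]` is finite over the local ring
`ℤ_[p]`, the element `1 - σ` lies in the Jacobson radical of `ℤ_[p][G]`. As
`ker N ⊆ (1 - σ) M`, the equality `N L = N M` gives `M = L + (1 - σ) M`, and Nakayama's lemma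
yields `L = M`.
-/

open Ideal IsLocalRing

lemma one_sub_pow_prime_pow_mem_span {R : Type*} [CommRing R] {p : ℕ} [Fact p.Prime] {x : R}
    {n : ℕ} (hx : x ^ p ^ n = 1) : (1 - x) ^ p ^ n ∈ span {(p : R)} := by
  rw [← Quotient.eq_zero_iff_mem, map_pow, map_sub, map_one]
  nontriviality R ⧸ span {(p : R)}
  have : CharP (R ⧸ span {(p : R)}) p := (CharP.charP_iff_prime_eq_zero Fact.out).2 <| by
    rw [← map_natCast (Ideal.Quotient.mk (span {(p : R)})), Quotient.eq_zero_iff_mem]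
    exact mem_span_singleton_self _
  rw [sub_pow_char_pow, one_pow, ← map_pow, hx, map_one, sub_self]

lemma algebraMap_mem_jacobson_bot {A R : Type*} [CommRing A] [IsLocalRing A] [CommRing R]
    [Algebra A R] [Algebra.IsIntegral A R] {a : A} (ha : a ∈ maximalIdeal A) :
    algebraMap A R a ∈ (⊥ : Ideal R).jacobson := by
  refine mem_sInf.2 fun J ⟨_, hJ⟩ => ?_
  have : (J.comap (algebraMap A R)).IsMaximal := isMaximal_comap_of_isIntegral_of_isMaximal J
  rwa [← mem_comap, eq_maximalIdeal this]

lemma one_sub_mem_jacobson_bot_of_pow_eq_one {A R : Type*} [CommRing A] [IsLocalRing A]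
    [CommRing R] [Algebra A R] [Algebra.IsIntegral A R] {p : ℕ} [Fact p.Prime]
    (hp : (p : A) ∈ maximalIdeal A) {x : R} {n : ℕ} (hx : x ^ p ^ n = 1) :
    1 - x ∈ (⊥ : Ideal R).jacobson := by
  have hpR : (p : R) ∈ (⊥ : Ideal R).jacobson := by
    simpa using algebraMap_mem_jacobson_bot (R := R) hp
  exact isRadical_jacobson _ ⟨p ^ n,
    (span_singleton_le_iff_mem _).2 hpR (one_sub_pow_prime_pow_mem_span hx)⟩

theorem stmt1_general (p : ℕ) [Fact p.Prime] (n : ℕ)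
    (M : Type*) [AddCommGroup M]
    [Module (MonoidAlgebra ℤ_[p] (Multiplicative (ZMod (p ^ n)))) M]
    [Module.Finite (MonoidAlgebra ℤ_[p] (Multiplicative (ZMod (p ^ n)))) M]
    (σ : MonoidAlgebra ℤ_[p] (Multiplicative (ZMod (p ^ n))))
    (hσ : σ = MonoidAlgebra.of ℤ_[p] (Multiplicative (ZMod (p ^ n)))
      (Multiplicative.ofAdd (1 : ZMod (p ^ n))))
    (N : MonoidAlgebra ℤ_[p] (Multiplicative (ZMod (p ^ n))))
    (hH1 : ∀ m : M, N • m = 0 → ∃ m' : M, m = m' - σ • m')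
    (L : Submodule (MonoidAlgebra ℤ_[p] (Multiplicative (ZMod (p ^ n)))) M)
    (hNL : Submodule.map (LinearMap.lsmul
        (MonoidAlgebra ℤ_[p] (Multiplicative (ZMod (p ^ n)))) M N) L
      = Submodule.map (LinearMap.lsmul
        (MonoidAlgebra ℤ_[p] (Multiplicative (ZMod (p ^ n)))) M N) ⊤) :
    L = ⊤ := by
  have hσp : σ ^ p ^ n = 1 := by
    rw [hσ, ← map_pow, ← ofAdd_nsmul, nsmul_one, ZMod.natCast_self, ofAdd_zero, map_one]
  have hjac : span {1 - σ} ≤ (⊥ : Ideal _).jacobson :=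
    (span_singleton_le_iff_mem _).2 <| one_sub_mem_jacobson_bot_of_pow_eq_one
      (mem_maximalIdeal _ |>.2 PadicInt.p_nonunit) hσp
  have hker : LinearMap.ker (LinearMap.lsmul _ M N) ≤ span {1 - σ} • ⊤ := by
    intro m hm
    obtain ⟨m', rfl⟩ := hH1 m hm
    rw [show m' - σ • m' = (1 - σ) • m' by rw [sub_smul, one_smul]]
    exact Submodule.smul_mem_smul (mem_span_singleton_self _) trivial
  have hcover : ⊤ ≤ L ⊔ span {1 - σ} • ⊤ :=
    ((LinearMap.map_le_map_iff _).1 hNL.ge).trans (sup_le_sup_left hker L)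
  exact top_unique (Submodule.le_of_le_smul_of_le_jacobson_bot Module.Finite.fg_top hjac hcover)

/-- "N(L) = N(M)" lemma: `G` finite cyclic (here `G = Multiplicative (ZMod (p^n))`,
generated by `σ = 1`), `M` a finitely generated `ℤ_[p][G]`-module with `H¹(G,M) = 0`
(i.e. the kernel of the norm element `N = Σ_g g` equals the image of `1 - σ`),
and `L ≤ M` a submodule with `N • L = N • M`.  Then `L = M`. -/
theorem stmt1 (p : ℕ) [Fact p.Prime] (n : ℕ) (hn : 1 ≤ n)
    (M : Type*) [AddCommGroup M]
    [Module (MonoidAlgebra ℤ_[p] (Multiplicative (ZMod (p ^ n)))) M]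
    [Module.Finite (MonoidAlgebra ℤ_[p] (Multiplicative (ZMod (p ^ n)))) M]
    (σ : MonoidAlgebra ℤ_[p] (Multiplicative (ZMod (p ^ n))))
    (hσ : σ = MonoidAlgebra.of ℤ_[p] (Multiplicative (ZMod (p ^ n)))
      (Multiplicative.ofAdd (1 : ZMod (p ^ n))))
    (N : MonoidAlgebra ℤ_[p] (Multiplicative (ZMod (p ^ n))))
    (hN : N = ∑ k ∈ Finset.range (p ^ n), σ ^ k)
    (hH1 : ∀ m : M, N • m = 0 → ∃ m' : M, m = m' - σ • m')
    (L : Submodule (MonoidAlgebra ℤ_[p] (Multiplicative (ZMod (p ^ n)))) M)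
    (hNL : Submodule.map (LinearMap.lsmul
        (MonoidAlgebra ℤ_[p] (Multiplicative (ZMod (p ^ n)))) M N) L
      = Submodule.map (LinearMap.lsmul
        (MonoidAlgebra ℤ_[p] (Multiplicative (ZMod (p ^ n)))) M N) ⊤) :
    L = ⊤ :=
  stmt1_general p n M σ hσ N hH1 L hNL
end

section
/- For a Q_p-irreducible character χ of the cyclic group G = Z/p^nZ, the Herbrand quotient q(χ) = |H⁰(G,V)|/|H¹(G,V)| of the corresponding module equals p^n if χ is the trivial character and 1/p otherwise. -/
/-!
Write `V = ℤ_p[X]/(P)`, `σ = x` and `N = ∑_{j < p^n} σ^j`. For the trivial character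
`V ≅ ℤ_p` with `σ = 1`, so `N = p^n` acts injectively: `H¹ = 0` and `H⁰ = ℤ_p/p^n`.
Otherwise `P(1) = p ≠ 0`, which makes `σ - 1` injective on `V`; since `N(σ - 1) = σ^{p^n} - 1 = 0`
this forces `N = 0`, so `H⁰ = 0` and `H¹ = V/(σ - 1) ≅ ℤ_p/P(1) = ℤ_p/p`.
-/

open Polynomial

/-- For `a b : A`, the quotient `ker(a·)/(ker(a·) ∩ im(b·))` on the module `M`,
used to express `H⁰` and `H¹` of a cyclic group acting via multiplication operators. -/
noncomputable def cohQuot (A : Type*) [CommRing A] (M : Type*) [AddCommGroup M]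
    [Module A M] (a b : A) :=
  LinearMap.ker (LinearMap.lsmul A M a) ⧸
    Submodule.comap (LinearMap.ker (LinearMap.lsmul A M a)).subtype
      (LinearMap.range (LinearMap.lsmul A M b))

section CohQuot

variable {A : Type*} [CommRing A] {M : Type*} [AddCommGroup M] [Module A M]

theorem card_cohQuot_of_isSMulRegular {a : A} (ha : IsSMulRegular M a) (b : A) :
    Nat.card (cohQuot A M a b) = 1 := by
  have : Subsingleton (LinearMap.ker (LinearMap.lsmul A M a)) := by
    rw [LinearMap.ker_eq_bot_of_injective (f := LinearMap.lsmul A M a) ha]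
    infer_instance
  unfold cohQuot
  exact Nat.card_unique

theorem card_cohQuot_zero (b : A) :
    Nat.card (cohQuot A M 0 b) = Nat.card (M ⧸ LinearMap.range (LinearMap.lsmul A M b)) := by
  let f := (LinearMap.range (LinearMap.lsmul A M b)).mkQ ∘ₗ
    (LinearMap.ker (LinearMap.lsmul A M 0)).subtype
  have hf : Function.Surjective f := fun m ↦ by
    obtain ⟨m, rfl⟩ := Submodule.mkQ_surjective _ m
    exact ⟨⟨m, by simp⟩, rfl⟩
  have hker : LinearMap.ker f = Submodule.comap (LinearMap.ker (LinearMap.lsmul A M 0)).subtype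
      (LinearMap.range (LinearMap.lsmul A M b)) := by
    rw [LinearMap.ker_comp, Submodule.ker_mkQ]
  unfold cohQuot
  rw [← hker]
  exact Nat.card_congr (f.quotKerEquivOfSurjective hf).toEquiv

theorem card_cohQuot_zero_self (b : A) :
    Nat.card (cohQuot A A 0 b) = Nat.card (A ⧸ Ideal.span {b}) := by
  rw [card_cohQuot_zero, ← Ideal.range_mul' b]
  rfl

end CohQuot

theorem PadicInt.card_quotient_span_pow (p : ℕ) [Fact p.Prime] (n : ℕ) :
    Nat.card (ℤ_[p] ⧸ Ideal.span {(p : ℤ_[p]) ^ n}) = p ^ n := by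
  rw [← PadicInt.ker_toZModPow, Nat.card_congr
    (RingHom.quotientKerEquivOfSurjective (ZMod.ringHom_surjective (toZModPow n))).toEquiv,
    Nat.card_zmod]

theorem RingEquiv.card_quotient_span_singleton {R S : Type*} [CommRing R] [CommRing S]
    (e : R ≃+* S) (r : R) :
    Nat.card (R ⧸ Ideal.span {r}) = Nat.card (S ⧸ Ideal.span {e r}) := by
  refine Nat.card_congr (Ideal.quotientEquiv _ _ e ?_).toEquiv
  rw [Ideal.map_span, Set.image_singleton]
  rfl

namespace Polynomial

variable {A : Type*} [CommRing A]

theorem mk_X_sub_one (P : A[X]) :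
    Ideal.Quotient.mk (Ideal.span {P}) X - 1 = Ideal.Quotient.mk (Ideal.span {P}) (X - C 1) := by
  rw [map_sub, C_1, map_one]

noncomputable def quotientSpanMkXSubCEquiv (P : A[X]) (a : A) :
    (A[X] ⧸ Ideal.span {P}) ⧸ Ideal.span {Ideal.Quotient.mk (Ideal.span {P}) (X - C a)} ≃+*
      A ⧸ Ideal.span {P.eval a} :=
  (Ideal.quotEquivOfEq (by rw [Ideal.map_span, Set.image_singleton])).trans <|
    (DoubleQuot.quotQuotEquivComm _ _).trans <|
      Ideal.quotientEquiv _ _ (quotientSpanXSubCAlgEquiv a).toRingEquiv <| by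
        rw [Ideal.map_span, Set.image_singleton, Ideal.map_span, Set.image_singleton]
        rfl

theorem isSMulRegular_mk_X_sub_C {P : A[X]} {a : A} (hP : P.eval a ∈ nonZeroDivisors A) :
    IsSMulRegular (A[X] ⧸ Ideal.span {P}) (Ideal.Quotient.mk (Ideal.span {P}) (X - C a)) := by
  refine IsSMulRegular.of_right_eq_zero_of_smul fun m hm ↦ ?_
  obtain ⟨f, rfl⟩ := Ideal.Quotient.mk_surjective m
  rw [smul_eq_mul, ← map_mul, Ideal.Quotient.eq_zero_iff_dvd] at hm
  obtain ⟨g, hg⟩ := hm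
  have hga : g.IsRoot a := by
    have := congrArg (eval a) hg
    rw [eval_mul, eval_mul, eval_sub, eval_X, eval_C, sub_self, zero_mul] at this
    exact (mul_left_mem_nonZeroDivisors_eq_zero_iff hP).mp this.symm
  rw [← mul_divByMonic_eq_iff_isRoot.mpr hga, mul_left_comm] at hg
  rw [Ideal.Quotient.eq_zero_iff_dvd]
  exact ⟨_, (monic_X_sub_C a).isRegular.left hg⟩

end Polynomial

theorem sum_pow_mul_dvd_pow_sub_one {R : Type*} [CommRing R] (a : R) {p q m : ℕ}
    (h : q * p ∣ m) : (∑ j ∈ Finset.range p, a ^ (j * q)) ∣ a ^ m - 1 := by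
  obtain ⟨r, rfl⟩ := h
  have hgeom : (∑ j ∈ Finset.range p, a ^ (j * q)) * (a ^ q - 1) = a ^ (q * p) - 1 := by
    simp_rw [mul_comm _ q, pow_mul]
    exact geom_sum_mul _ _
  calc _ ∣ a ^ (q * p) - 1 := Dvd.intro _ hgeom
    _ ∣ (a ^ (q * p)) ^ r - 1 ^ r := sub_dvd_pow_sub_pow _ _ r
    _ = a ^ (q * p * r) - 1 := by rw [← pow_mul, one_pow]

section Herbrand

variable {A : Type*} [CommRing A]

theorem card_cohQuot_trivial_character [IsDomain A] {m : ℕ} (hm : (m : A) ≠ 0) :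
    Nat.card (cohQuot (A[X] ⧸ Ideal.span {X - C (1 : A)}) (A[X] ⧸ Ideal.span {X - C (1 : A)})
        (Ideal.Quotient.mk _ X - 1) (∑ j ∈ Finset.range m, Ideal.Quotient.mk _ X ^ j))
      = Nat.card (A ⧸ Ideal.span {(m : A)}) ∧
    Nat.card (cohQuot (A[X] ⧸ Ideal.span {X - C (1 : A)}) (A[X] ⧸ Ideal.span {X - C (1 : A)})
        (∑ j ∈ Finset.range m, Ideal.Quotient.mk _ X ^ j) (Ideal.Quotient.mk _ X - 1)) = 1 := by
  let ε := (quotientSpanXSubCAlgEquiv (1 : A)).toRingEquiv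
  have hx : Ideal.Quotient.mk (Ideal.span {X - C (1 : A)}) X = 1 := by
    rw [← sub_eq_zero, mk_X_sub_one, Ideal.Quotient.eq_zero_iff_mem]
    exact Ideal.mem_span_singleton_self _
  have hN : ∑ j ∈ Finset.range m, Ideal.Quotient.mk (Ideal.span {X - C (1 : A)}) X ^ j = m := by
    simp [hx]
  rw [hN, hx, sub_self]
  have : IsDomain (A[X] ⧸ Ideal.span {X - C (1 : A)}) := ε.toMulEquiv.isDomain A
  have hm' : (m : A[X] ⧸ Ideal.span {X - C (1 : A)}) ≠ 0 := by
    rwa [← ε.map_ne_zero_iff, map_natCast]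
  refine ⟨?_, card_cohQuot_of_isSMulRegular
    (IsLeftCancelMulZero.mul_left_cancel_of_ne_zero hm').isSMulRegular _⟩
  rw [card_cohQuot_zero_self, ε.card_quotient_span_singleton, map_natCast]

theorem card_cohQuot_nontrivial_character {P : A[X]} {m : ℕ} (hPm : P ∣ X ^ m - 1)
    (hP : P.eval 1 ∈ nonZeroDivisors A) :
    Nat.card (cohQuot (A[X] ⧸ Ideal.span {P}) (A[X] ⧸ Ideal.span {P})
        (Ideal.Quotient.mk _ X - 1) (∑ j ∈ Finset.range m, Ideal.Quotient.mk _ X ^ j)) = 1 ∧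
    Nat.card (cohQuot (A[X] ⧸ Ideal.span {P}) (A[X] ⧸ Ideal.span {P})
        (∑ j ∈ Finset.range m, Ideal.Quotient.mk _ X ^ j) (Ideal.Quotient.mk _ X - 1))
      = Nat.card (A ⧸ Ideal.span {P.eval 1}) := by
  have hreg := isSMulRegular_mk_X_sub_C hP
  rw [← mk_X_sub_one] at hreg
  have hN : ∑ j ∈ Finset.range m, Ideal.Quotient.mk (Ideal.span {P}) X ^ j = 0 := by
    refine hreg.right_eq_zero_of_smul ?_
    rw [smul_eq_mul, mul_comm, geom_sum_mul, ← map_pow, ← map_one (Ideal.Quotient.mk _),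
      ← map_sub, Ideal.Quotient.eq_zero_iff_dvd]
    exact hPm
  rw [hN, card_cohQuot_of_isSMulRegular hreg, card_cohQuot_zero_self, mk_X_sub_one,
    Nat.card_congr (quotientSpanMkXSubCEquiv P 1).toEquiv]
  exact ⟨rfl, rfl⟩

end Herbrand

/-- `H⁰ = ker(σ - 1)/im N` is `cohQuot _ V (x - 1) Nx` and `H¹ = ker N/im(σ - 1)` is
`cohQuot _ V Nx (x - 1)`; the Herbrand quotients `p^n` and `1/p` are stated without division. -/
theorem stmt2_general (p : ℕ) [Fact p.Prime] (n : ℕ) (k : ℕ) (hk : k ≤ n)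
    (P : Polynomial ℤ_[p])
    (hP : P = if k = 0 then X - 1 else ∑ j ∈ Finset.range p, X ^ (j * p ^ (k - 1)))
    (x Nx : Polynomial ℤ_[p] ⧸ Ideal.span {P})
    (hx : x = Ideal.Quotient.mk _ X)
    (hNx : Nx = ∑ j ∈ Finset.range (p ^ n), x ^ j) :
    if k = 0 then
      Nat.card (cohQuot _ (Polynomial ℤ_[p] ⧸ Ideal.span {P}) (x - 1) Nx)
        = p ^ n * Nat.card (cohQuot _ (Polynomial ℤ_[p] ⧸ Ideal.span {P}) Nx (x - 1))
    else
      p * Nat.card (cohQuot _ (Polynomial ℤ_[p] ⧸ Ideal.span {P}) (x - 1) Nx)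
        = Nat.card (cohQuot _ (Polynomial ℤ_[p] ⧸ Ideal.span {P}) Nx (x - 1)) := by
  subst hx hNx
  have hp : (p : ℤ_[p]) ≠ 0 := Nat.cast_ne_zero.mpr (Fact.out : p.Prime).ne_zero
  split_ifs at hP ⊢ with hk0
  · rw [← C_1] at hP
    subst hP
    obtain ⟨hH0, hH1⟩ := card_cohQuot_trivial_character (A := ℤ_[p]) (m := p ^ n)
      (by push_cast; exact pow_ne_zero n hp)
    rw [hH0, hH1, Nat.cast_pow, PadicInt.card_quotient_span_pow, mul_one]
  · subst hP
    have hdvd : p ^ (k - 1) * p ∣ p ^ n := by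
      rw [← pow_succ, Nat.sub_add_cancel (Nat.pos_of_ne_zero hk0)]
      exact Nat.pow_dvd_pow p hk
    have heval : (∑ j ∈ Finset.range p, (X : ℤ_[p][X]) ^ (j * p ^ (k - 1))).eval 1 = p := by
      simp [eval_finsetSum]
    obtain ⟨hH0, hH1⟩ := card_cohQuot_nontrivial_character (sum_pow_mul_dvd_pow_sub_one X hdvd)
      (heval ▸ mem_nonZeroDivisors_of_ne_zero hp)
    rw [hH0, hH1, heval, ← pow_one (p : ℤ_[p]), PadicInt.card_quotient_span_pow, pow_one, mul_one]

/-- The irreducible `ℚ_p`-character lattice `V_k = ℤ_[p][X]/(P_k)` for `G = ℤ/p^nℤ`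
acting via multiplication by `X`, where `P_0 = X - 1` and `P_k = Σ_{j<p} X^{j p^{k-1}}`
for `k ≥ 1`.  Its Herbrand quotient `|H⁰(G,V_k)|/|H¹(G,V_k)|` equals `p^n` if `k = 0`
(the trivial character) and `1/p` otherwise; stated without division as
`|H⁰| = p^n·|H¹|` resp. `p·|H⁰| = |H¹|`, where `H⁰ = ker(σ-1)/im(N)` and
`H¹ = ker(N)/im(σ-1)` with `σ = x` (the class of `X`) and `N = Σ_{j<p^n} x^j`. -/
theorem stmt2 (p : ℕ) [Fact p.Prime] (n : ℕ) (hn : 1 ≤ n) (k : ℕ) (hk : k ≤ n)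
    (P : Polynomial ℤ_[p])
    (hP : P = if k = 0 then X - 1 else ∑ j ∈ Finset.range p, X ^ (j * p ^ (k - 1)))
    (x Nx : Polynomial ℤ_[p] ⧸ Ideal.span {P})
    (hx : x = Ideal.Quotient.mk _ X)
    (hNx : Nx = ∑ j ∈ Finset.range (p ^ n), x ^ j) :
    if k = 0 then
      Nat.card (cohQuot _ (Polynomial ℤ_[p] ⧸ Ideal.span {P}) (x - 1) Nx)
        = p ^ n * Nat.card (cohQuot _ (Polynomial ℤ_[p] ⧸ Ideal.span {P}) Nx (x - 1))
    else
      p * Nat.card (cohQuot _ (Polynomial ℤ_[p] ⧸ Ideal.span {P}) (x - 1) Nx)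
        = Nat.card (cohQuot _ (Polynomial ℤ_[p] ⧸ Ideal.span {P}) Nx (x - 1)) :=
  stmt2_general p n k hk P hP x Nx hx hNx
end

section
/- Let F/K be a cyclic extension of fields of degree p^n with Galois group generated by σ, with μ_{p^a} ⊆ K. Suppose z, y ∈ F^× satisfy z^{p^a} = y^{1-σ} and N(z) = ξ, a primitive p^a-th root of unity, where N is the norm F→K. Set c = min(n,a), A = Σ_{k=0}^{p^n-1} k σ^k, and r = z^{p^{a-c}A} y^{p^{n-c}}. Then r^{1-σ} = ξ^{p^{a-c}}, so r_0 = r^{p^c} lies in K, and moreover N(y) = r_0. -/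
/-!
Write `N = ∑ σ^k` and `A = ∑ k σ^k` in `ℤ[⟨σ⟩]`, with `q = p^n`. Since `σ^q = 1`, shifting the
index in `A` telescopes to `(σ - 1) A = q - N`. Applied to `z`, together with
`z^{q p^{a-c}} = (y / σ y)^{p^{n-c}}` and `z^N = ξ`, this gives `σ r · ξ^{p^{a-c}} = r`; as
`ξ^{p^a} = 1`, the power `r^{p^c}` is fixed by the generator `σ` and so lies in `K`. Applied to
`y = z^{p^a} · σ y`, it gives `y^N = y^q z^{p^a A} = r^{p^c}`.
-/

open Finset

theorem Finset.prod_range_succ_eq_prod_range_of_eq {M : Type*} [CommMonoid M] {f : ℕ → M}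
    {q : ℕ} (hf : f q = f 0) : ∏ k ∈ range q, f (k + 1) = ∏ k ∈ range q, f k := by
  cases q with
  | zero => simp
  | succ m => rw [prod_range_succ, prod_range_succ', hf]

namespace AlgEquiv

section CommSemiring

variable {K F : Type*} [CommSemiring K] [CommSemiring F] [Algebra K F] (σ : F ≃ₐ[K] F) (q : ℕ)

/-- For `q = [F : K]` this is the norm `N(x)`. -/
def orbitProd (x : F) : F := ∏ k ∈ range q, (σ ^ k) x

/-- The power `x ^ A` for `A = ∑_{k < q} k σ^k`. -/
def weightedOrbitProd (x : F) : F := ∏ k ∈ range q, (σ ^ k) x ^ k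

variable {σ q}

theorem weightedOrbitProd_mul (x y : F) :
    weightedOrbitProd σ q (x * y) = weightedOrbitProd σ q x * weightedOrbitProd σ q y := by
  simp only [weightedOrbitProd, map_mul, mul_pow, prod_mul_distrib]

theorem weightedOrbitProd_pow (x : F) (j : ℕ) :
    weightedOrbitProd σ q (x ^ j) = weightedOrbitProd σ q x ^ j := by
  simp only [weightedOrbitProd, map_pow, ← prod_pow, pow_right_comm]

theorem weightedOrbitProd_apply (x : F) :
    weightedOrbitProd σ q (σ x) = σ (weightedOrbitProd σ q x) := by
  simp only [weightedOrbitProd, map_prod, map_pow, ← mul_apply, ← pow_succ, ← pow_succ']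

theorem apply_orbitProd (hσ : σ ^ q = 1) (x : F) : σ (orbitProd σ q x) = orbitProd σ q x := by
  simp only [orbitProd, map_prod, ← mul_apply, ← pow_succ']
  exact prod_range_succ_eq_prod_range_of_eq (f := fun k ↦ (σ ^ k) x) (by simp [hσ])

theorem apply_weightedOrbitProd_mul_orbitProd (hσ : σ ^ q = 1) (x : F) :
    σ (weightedOrbitProd σ q x) * orbitProd σ q x = weightedOrbitProd σ q x * x ^ q := by
  have hshift : weightedOrbitProd σ q x * x ^ q = ∏ k ∈ range q, (σ ^ (k + 1)) x ^ (k + 1) := by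
    calc weightedOrbitProd σ q x * x ^ q = ∏ k ∈ range (q + 1), (σ ^ k) x ^ k := by
          rw [prod_range_succ, hσ, one_apply, weightedOrbitProd]
      _ = _ := by simp [prod_range_succ']
  rw [hshift, ← apply_orbitProd hσ, orbitProd, weightedOrbitProd]
  simp only [map_prod, map_pow, ← mul_apply, ← pow_succ', ← prod_mul_distrib, pow_succ]

theorem apply_mul_orbitProd_pow_eq_self (hσ : σ ^ q = 1) {z y : F} {s e m : ℕ}
    (hzy : y = z ^ s * σ y) (hqe : q * e = s * m) :
    σ (weightedOrbitProd σ q z ^ e * y ^ m) * orbitProd σ q z ^ e =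
      weightedOrbitProd σ q z ^ e * y ^ m := by
  calc σ (weightedOrbitProd σ q z ^ e * y ^ m) * orbitProd σ q z ^ e
      = (σ (weightedOrbitProd σ q z) * orbitProd σ q z) ^ e * σ y ^ m := by
        rw [map_mul, map_pow, map_pow]; ring
    _ = weightedOrbitProd σ q z ^ e * (z ^ s * σ y) ^ m := by
        rw [apply_weightedOrbitProd_mul_orbitProd hσ, mul_pow, ← pow_mul, hqe, pow_mul]; ring
    _ = weightedOrbitProd σ q z ^ e * y ^ m := by rw [← hzy]

end CommSemiring

section Domain

variable {K F : Type*} [CommSemiring K] [CommRing F] [IsDomain F] [Algebra K F] {σ : F ≃ₐ[K] F}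
  {q : ℕ}

theorem weightedOrbitProd_ne_zero {x : F} (hx : x ≠ 0) : weightedOrbitProd σ q x ≠ 0 :=
  prod_ne_zero_iff.mpr fun k _ ↦ pow_ne_zero _ ((map_ne_zero_iff _ (σ ^ k).injective).mpr hx)

theorem orbitProd_eq_of_eq_mul_apply (hσ : σ ^ q = 1) {y w : F} (hy : y ≠ 0)
    (hyw : y = w * σ y) : orbitProd σ q y = weightedOrbitProd σ q w * y ^ q := by
  have hW : weightedOrbitProd σ q y = weightedOrbitProd σ q w * σ (weightedOrbitProd σ q y) := by
    conv_lhs => rw [hyw]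
    rw [weightedOrbitProd_mul, weightedOrbitProd_apply]
  apply mul_left_cancel₀ (weightedOrbitProd_ne_zero (q := q) (σ := σ) hy)
  calc weightedOrbitProd σ q y * orbitProd σ q y
      = weightedOrbitProd σ q w * σ (weightedOrbitProd σ q y) * orbitProd σ q y := by rw [← hW]
    _ = weightedOrbitProd σ q w * (weightedOrbitProd σ q y * y ^ q) := by
        rw [mul_assoc, apply_weightedOrbitProd_mul_orbitProd hσ]
    _ = weightedOrbitProd σ q y * (weightedOrbitProd σ q w * y ^ q) := by ring

end Domain

theorem mem_range_algebraMap_of_apply_eq {K F : Type*} [Field K] [Field F] [Algebra K F]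
    [IsGalois K F] {σ : F ≃ₐ[K] F} (hσ : ∀ τ : F ≃ₐ[K] F, τ ∈ Subgroup.zpowers σ) {x : F}
    (hx : σ x = x) : x ∈ Set.range (algebraMap K F) :=
  (InfiniteGalois.mem_range_algebraMap_iff_fixed x).mpr fun τ ↦
    (Subgroup.zpowers_le (H := MulAction.stabilizer _ x)).mpr hx (hσ τ)

end AlgEquiv

theorem stmt4_general (p : ℕ) (n a : ℕ)
    (K F : Type*) [Field K] [Field F] [Algebra K F] [IsGalois K F]
    [FiniteDimensional K F] (hdeg : Module.finrank K F = p ^ n)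
    (σ : F ≃ₐ[K] F) (hσ : ∀ τ : F ≃ₐ[K] F, τ ∈ Subgroup.zpowers σ)
    (ξ : K) (hξ : IsPrimitiveRoot ξ (p ^ a))
    (z y : F) (hz : z ≠ 0) (hy : y ≠ 0)
    (hrel : z ^ (p ^ a) = y / σ y)
    (hNz : (∏ k ∈ Finset.range (p ^ n), (σ ^ k) z) = algebraMap K F ξ)
    (c : ℕ) (hc : c = min n a)
    (r : F)
    (hr : r = (∏ k ∈ Finset.range (p ^ n), ((σ ^ k) z) ^ (k * p ^ (a - c)))
      * y ^ (p ^ (n - c))) :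
    r / σ r = algebraMap K F ξ ^ (p ^ (a - c)) ∧
    (∃ r0 : K, algebraMap K F r0 = r ^ (p ^ c)) ∧
    (∏ k ∈ Finset.range (p ^ n), (σ ^ k) y) = r ^ (p ^ c) := by
  have hcn : c ≤ n := hc ▸ min_le_left n a
  have hca : c ≤ a := hc ▸ min_le_right n a
  have hσq : σ ^ p ^ n = 1 := by
    rw [← hdeg, ← IsGalois.card_aut_eq_finrank]
    exact pow_card_eq_one'
  have hyz : y = z ^ p ^ a * σ y := by
    rw [hrel, div_mul_cancel₀ _ ((map_ne_zero_iff _ σ.injective).mpr hy)]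
  have hr' : r = σ.weightedOrbitProd (p ^ n) z ^ p ^ (a - c) * y ^ p ^ (n - c) := by
    simp only [hr, AlgEquiv.weightedOrbitProd, ← prod_pow, pow_mul]
  have hrσ : σ r * algebraMap K F ξ ^ p ^ (a - c) = r := by
    rw [← hNz, hr']
    refine AlgEquiv.apply_mul_orbitProd_pow_eq_self hσq hyz ?_
    rw [← pow_add, ← pow_add]
    congr 1
    omega
  have hξ1 : (algebraMap K F ξ ^ p ^ (a - c)) ^ p ^ c = 1 := by
    rw [← pow_mul, ← pow_add, Nat.sub_add_cancel hca, ← map_pow, hξ.pow_eq_one, map_one]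
  have hfix : σ (r ^ p ^ c) = r ^ p ^ c := by
    conv_rhs => rw [← hrσ]
    rw [map_pow, mul_pow, hξ1, mul_one]
  have hσr : σ r ≠ 0 := (map_ne_zero_iff _ σ.injective).mpr <| hr' ▸
    mul_ne_zero (pow_ne_zero _ (AlgEquiv.weightedOrbitProd_ne_zero hz)) (pow_ne_zero _ hy)
  refine ⟨(div_eq_iff hσr).mpr (hrσ.symm.trans (mul_comm _ _)),
    AlgEquiv.mem_range_algebraMap_of_apply_eq hσ hfix, ?_⟩
  rw [hr', mul_pow, ← pow_mul, ← pow_mul, ← pow_add, ← pow_add, Nat.sub_add_cancel hca,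
    Nat.sub_add_cancel hcn, ← AlgEquiv.weightedOrbitProd_pow]
  exact AlgEquiv.orbitProd_eq_of_eq_mul_apply hσq hy hyz

/-- Lemma (3.2.1): `F/K` cyclic of degree `p^n` with group generated by `σ`,
`μ_{p^a} ⊆ K`, `z, y ∈ F^×` with `z^{p^a} = y^{1-σ}` and `N(z) = ξ` a primitive
`p^a`-th root of unity.  With `c = min n a`, `A = Σ_k k σ^k` and
`r = z^{p^{a-c}A} y^{p^{n-c}}`, one has `r^{1-σ} = ξ^{p^{a-c}}`, hence
`r_0 = r^{p^c}` lies in `K`, and moreover `N(y) = r_0`. -/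
theorem stmt4 (p : ℕ) [Fact p.Prime] (n a : ℕ) (hn : 1 ≤ n) (ha : 1 ≤ a)
    (K F : Type*) [Field K] [Field F] [Algebra K F] [IsGalois K F]
    [FiniteDimensional K F] (hdeg : Module.finrank K F = p ^ n)
    (σ : F ≃ₐ[K] F) (hσ : ∀ τ : F ≃ₐ[K] F, τ ∈ Subgroup.zpowers σ)
    (ξ : K) (hξ : IsPrimitiveRoot ξ (p ^ a))
    (z y : F) (hz : z ≠ 0) (hy : y ≠ 0)
    (hrel : z ^ (p ^ a) = y / σ y)
    (hNz : (∏ k ∈ Finset.range (p ^ n), (σ ^ k) z) = algebraMap K F ξ)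
    (c : ℕ) (hc : c = min n a)
    (r : F)
    (hr : r = (∏ k ∈ Finset.range (p ^ n), ((σ ^ k) z) ^ (k * p ^ (a - c)))
      * y ^ (p ^ (n - c))) :
    r / σ r = algebraMap K F ξ ^ (p ^ (a - c)) ∧
    (∃ r0 : K, algebraMap K F r0 = r ^ (p ^ c)) ∧
    (∏ k ∈ Finset.range (p ^ n), (σ ^ k) y) = r ^ (p ^ c) :=
  stmt4_general p n a K F hdeg σ hσ ξ hξ z y hz hy hrel hNz c hc r hr
end

section
/- Let F/K be a cyclic extension of fields of degree p^n with Galois group generated by σ, μ_{p^a} ⊆ K, and c = min(n,a). Suppose z, y ∈ F^× and x_0 ∈ K^× satisfy z^{p^a} = x_0 · y^{1-σ} and N(z)^{p^{a-c}} = ξ · x_0^{p^{n-c}} with ξ a root of unity of order p^c. Then r = z^{p^{a-c}A} y^{p^{n-c}} satisfies r^{1-σ} = ξ, r_0 := r^{p^c} ∈ K^×, and N(y) = r_0 / x_0^{p^n(p^n-1)/2}. -/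
/-!
Write `u^A = ∏ₖ (σᵏ u)^k` and `N u = ∏ₖ σᵏ u` for `k < p^n`. In `ℤ[G]` one has
`A (1 - σ) = N - p^n`, i.e. `u^A · u^{p^n} = σ(u^A) · N u`. Raising this to the power
`p^{a-c}` for `u = z` and substituting `z^{p^a} = x₀ · y^{1-σ}` and the value of
`N(z)^{p^{a-c}}` gives `r = ξ · σ r`, so `r^{p^c}` is `σ`-invariant and hence lies in `K`.
Applying `A` to `z^{p^a} = x₀ · y^{1-σ}` gives `(z^A)^{p^a} = x₀^{A(1)} · (y^A)^{1-σ}`,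
and the same identity for `u = y` turns this into `r^{p^c} = x₀^{A(1)} · N y`.
-/

open Finset

section CommMonoid

variable {G M : Type*} [Monoid G] [CommMonoid M] [MulDistribMulAction G M] {σ : G} {N : ℕ}

theorem smul_prod_range_pow_smul (hσ : σ ^ N = 1) (u : M) :
    σ • ∏ k ∈ range N, σ ^ k • u = ∏ k ∈ range N, σ ^ k • u := by
  simp only [smul_prod', smul_smul, ← pow_succ']
  cases N with
  | zero => simp
  | succ N => rw [prod_range_succ, prod_range_succ', hσ, pow_zero, mul_comm]

theorem prod_range_smul_pow_mul_pow (hσ : σ ^ N = 1) (u : M) :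
    (∏ k ∈ range N, (σ ^ k • u) ^ k) * u ^ N
      = σ • (∏ k ∈ range N, (σ ^ k • u) ^ k) * ∏ k ∈ range N, σ ^ k • u := by
  have shifted := prod_range_succ' (fun k ↦ (σ ^ k • u) ^ k) N
  rw [prod_range_succ, hσ, one_smul] at shifted
  rw [shifted, ← smul_prod_range_pow_smul hσ, smul_prod', smul_prod', ← prod_mul_distrib]
  simp [smul_pow', smul_smul, ← pow_succ', pow_succ]

theorem prod_range_smul_pow_pow_mul_smul {e : ℕ} {x y z : M} (hx : σ • x = x)
    (hrel : z ^ e * σ • y = x * y) (N : ℕ) :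
    (∏ k ∈ range N, (σ ^ k • z) ^ k) ^ e * σ • ∏ k ∈ range N, (σ ^ k • y) ^ k
      = x ^ (∑ k ∈ range N, k) * ∏ k ∈ range N, (σ ^ k • y) ^ k := by
  have hrel_k (k : ℕ) : (σ ^ k • z) ^ e * σ ^ (k + 1) • y = x * σ ^ k • y := by
    rw [pow_succ, mul_smul, ← smul_pow', ← smul_mul', hrel, smul_mul',
      (MulAction.stabilizerSubmonoid G x).pow_mem hx k]
  rw [smul_prod', ← prod_pow, ← prod_pow_eq_pow_sum, ← prod_mul_distrib, ← prod_mul_distrib]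
  refine prod_congr rfl fun k _ ↦ ?_
  rw [smul_pow', smul_smul, ← pow_succ', ← pow_right_comm, ← mul_pow, hrel_k, mul_pow]

theorem smul_pow_eq_self_of_eq_mul_smul {m : ℕ} {ξ r : M} (hξ : ξ ^ m = 1)
    (hr : r = ξ * σ • r) : σ • r ^ m = r ^ m := by
  rw [smul_pow']
  conv_rhs => rw [hr]
  rw [mul_pow, hξ, one_mul]

end CommMonoid

section Field

variable {G F : Type*} [Field F] {σ : G} {N : ℕ}

theorem prod_range_smul_pow_pow_mul_pow [Group G] [MulSemiringAction G F] (hσ : σ ^ N = 1)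
    {e : ℕ} {x y z : F} (hx : σ • x = x) (hy : y ≠ 0) (hrel : z ^ e * σ • y = x * y) :
    (∏ k ∈ range N, (σ ^ k • z) ^ k) ^ e * y ^ N
      = x ^ (∑ k ∈ range N, k) * ∏ k ∈ range N, σ ^ k • y := by
  have hQ : σ • ∏ k ∈ range N, (σ ^ k • y) ^ k ≠ 0 :=
    (smul_ne_zero_iff_ne σ).mpr <| prod_ne_zero_iff.mpr fun k _ ↦
      pow_ne_zero k <| (smul_ne_zero_iff_ne _).mpr hy
  refine mul_right_cancel₀ hQ ?_
  calc _ = ((∏ k ∈ range N, (σ ^ k • z) ^ k) ^ e * σ • ∏ k ∈ range N, (σ ^ k • y) ^ k)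
          * y ^ N := by ring
    _ = x ^ (∑ k ∈ range N, k) * ((∏ k ∈ range N, (σ ^ k • y) ^ k) * y ^ N) := by
          rw [prod_range_smul_pow_pow_mul_smul hx hrel, mul_assoc]
    _ = _ := by rw [prod_range_smul_pow_mul_pow hσ]; ring

theorem prod_range_smul_pow_pow_mul_pow_eq_mul_smul [Monoid G] [MulDistribMulAction G F]
    (hσ : σ ^ N = 1) {e m q : ℕ} (hexp : N * m = e * q) {ξ x y z : F} (hx : x ≠ 0)
    (hrel : z ^ e * σ • y = x * y) (hNz : (∏ k ∈ range N, σ ^ k • z) ^ m = ξ * x ^ q) :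
    (∏ k ∈ range N, (σ ^ k • z) ^ k) ^ m * y ^ q
      = ξ * σ • ((∏ k ∈ range N, (σ ^ k • z) ^ k) ^ m * y ^ q) := by
  have key := congrArg (· ^ m) (prod_range_smul_pow_mul_pow hσ z)
  rw [mul_pow, mul_pow, hNz, ← pow_mul, hexp, pow_mul] at key
  refine mul_left_cancel₀ (pow_ne_zero q hx) ?_
  calc _ = (∏ k ∈ range N, (σ ^ k • z) ^ k) ^ m * (z ^ e * σ • y) ^ q := by
          rw [hrel]; ring
    _ = _ := by rw [mul_pow, ← mul_assoc, key, smul_mul', smul_pow', smul_pow']; ring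

end Field

theorem AlgEquiv.exists_algebraMap_eq_of_apply_eq_self {K F : Type*} [Field K] [Field F]
    [Algebra K F] [IsGalois K F] [FiniteDimensional K F] {σ : F ≃ₐ[K] F}
    (hσ : ∀ τ : F ≃ₐ[K] F, τ ∈ Subgroup.zpowers σ) {x : F} (hx : σ x = x) :
    ∃ x₀ : K, algebraMap K F x₀ = x :=
  (IsGalois.mem_range_algebraMap_iff_fixed x).mpr fun τ ↦
    Subgroup.zpowers_le.mpr (show σ ∈ MulAction.stabilizer _ x from hx) (hσ τ)

theorem stmt5_general (p : ℕ) (n a : ℕ)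
    (K F : Type*) [Field K] [Field F] [Algebra K F] [IsGalois K F]
    [FiniteDimensional K F] (hdeg : Module.finrank K F = p ^ n)
    (σ : F ≃ₐ[K] F) (hσ : ∀ τ : F ≃ₐ[K] F, τ ∈ Subgroup.zpowers σ)
    (c : ℕ) (hc : c = min n a)
    (ξ : K) (hξ : IsPrimitiveRoot ξ (p ^ c))
    (x₀ : K) (hx₀ : x₀ ≠ 0)
    (z y : F) (hz : z ≠ 0) (hy : y ≠ 0)
    (hrel : z ^ (p ^ a) = algebraMap K F x₀ * (y / σ y))
    (hNz : (∏ k ∈ Finset.range (p ^ n), (σ ^ k) z) ^ (p ^ (a - c))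
      = algebraMap K F (ξ * x₀ ^ (p ^ (n - c))))
    (r : F)
    (hr : r = (∏ k ∈ Finset.range (p ^ n), ((σ ^ k) z) ^ (k * p ^ (a - c)))
      * y ^ (p ^ (n - c))) :
    r / σ r = algebraMap K F ξ ∧
    (∃ r0 : K, algebraMap K F r0 = r ^ (p ^ c)) ∧
    (∏ k ∈ Finset.range (p ^ n), (σ ^ k) y)
      = r ^ (p ^ c) / algebraMap K F x₀ ^ (p ^ n * (p ^ n - 1) / 2) := by
  simp only [← AlgEquiv.smul_def] at hrel hNz hr ⊢
  rw [map_mul, map_pow] at hNz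
  have hσN : σ ^ p ^ n = 1 := by
    rw [← hdeg, ← IsGalois.card_aut_eq_finrank]; exact pow_card_eq_one'
  have hx₀' : algebraMap K F x₀ ≠ 0 := (map_ne_zero _).mpr hx₀
  have hrel' : z ^ p ^ a * σ • y = algebraMap K F x₀ * y := by
    rw [hrel, mul_assoc, div_mul_cancel₀ _ ((smul_ne_zero_iff_ne σ).mpr hy)]
  have hr' : r = (∏ k ∈ range (p ^ n), (σ ^ k • z) ^ k) ^ p ^ (a - c) * y ^ p ^ (n - c) := by
    simp only [hr, ← prod_pow, pow_mul]
  have hr0 : r ≠ 0 := hr' ▸ mul_ne_zero (pow_ne_zero _ <| prod_ne_zero_iff.mpr fun k _ ↦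
    pow_ne_zero k <| (smul_ne_zero_iff_ne _).mpr hz) (pow_ne_zero _ hy)
  have hr_eq : r = algebraMap K F ξ * σ • r := hr' ▸
    prod_range_smul_pow_pow_mul_pow_eq_mul_smul hσN
      (by rw [← pow_add, ← pow_add]; congr 1; omega) hx₀' hrel' hNz
  have hr_pow : r ^ p ^ c
      = algebraMap K F x₀ ^ (∑ k ∈ range (p ^ n), k) * ∏ k ∈ range (p ^ n), σ ^ k • y := by
    rw [← prod_range_smul_pow_pow_mul_pow hσN (σ.commutes x₀) hy hrel', hr', mul_pow,
      ← pow_mul, ← pow_mul, ← pow_add, ← pow_add]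
    congr 3 <;> omega
  have hfix : σ • r ^ p ^ c = r ^ p ^ c :=
    smul_pow_eq_self_of_eq_mul_smul (by rw [← map_pow, hξ.pow_eq_one, map_one]) hr_eq
  refine ⟨?_, AlgEquiv.exists_algebraMap_eq_of_apply_eq_self hσ hfix, ?_⟩
  · rwa [div_eq_iff ((smul_ne_zero_iff_ne σ).mpr hr0)]
  · rw [hr_pow, ← sum_range_id, mul_div_cancel_left₀ _ (pow_ne_zero _ hx₀')]

/-- Lemma (3.5.7): `F/K` cyclic of degree `p^n` generated by `σ`, `μ_{p^a} ⊆ K`,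
`c = min n a`.  If `z^{p^a} = x₀ · y^{1-σ}` with `x₀ ∈ K^×` and
`N(z)^{p^{a-c}} = ξ · x₀^{p^{n-c}}` with `ξ` of order `p^c`, then
`r = z^{p^{a-c}A} y^{p^{n-c}}` satisfies `r^{1-σ} = ξ`, `r₀ = r^{p^c} ∈ K`, and
`N(y) = r₀ / x₀^{p^n(p^n-1)/2}`. -/
theorem stmt5 (p : ℕ) [Fact p.Prime] (n a : ℕ) (hn : 1 ≤ n) (ha : 1 ≤ a)
    (K F : Type*) [Field K] [Field F] [Algebra K F] [IsGalois K F]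
    [FiniteDimensional K F] (hdeg : Module.finrank K F = p ^ n)
    (σ : F ≃ₐ[K] F) (hσ : ∀ τ : F ≃ₐ[K] F, τ ∈ Subgroup.zpowers σ)
    (hμK : ∃ ζ : K, IsPrimitiveRoot ζ (p ^ a))
    (c : ℕ) (hc : c = min n a)
    (ξ : K) (hξ : IsPrimitiveRoot ξ (p ^ c))
    (x₀ : K) (hx₀ : x₀ ≠ 0)
    (z y : F) (hz : z ≠ 0) (hy : y ≠ 0)
    (hrel : z ^ (p ^ a) = algebraMap K F x₀ * (y / σ y))
    (hNz : (∏ k ∈ Finset.range (p ^ n), (σ ^ k) z) ^ (p ^ (a - c))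
      = algebraMap K F (ξ * x₀ ^ (p ^ (n - c))))
    (r : F)
    (hr : r = (∏ k ∈ Finset.range (p ^ n), ((σ ^ k) z) ^ (k * p ^ (a - c)))
      * y ^ (p ^ (n - c))) :
    r / σ r = algebraMap K F ξ ∧
    (∃ r0 : K, algebraMap K F r0 = r ^ (p ^ c)) ∧
    (∏ k ∈ Finset.range (p ^ n), (σ ^ k) y)
      = r ^ (p ^ c) / algebraMap K F x₀ ^ (p ^ n * (p ^ n - 1) / 2) :=
  stmt5_general p n a K F hdeg σ hσ c hc ξ hξ x₀ hx₀ z y hz hy hrel hNz r hr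
end

section
/- Let K be a 2-adic field with i ∉ K and such that Gal(K[μ_{2^∞}]/K), viewed inside Z_2^× via the cyclotomic character, contains -1 (the non-procyclic case). Then for every root of unity ξ ∈ μ_{K(i)} of 2-power order, N_{K(i)/K}(ξ) = 1, and any cyclic 2-extension of K containing a cyclotomic subextension K_m with [K_m:K] = 2^m forces m ≤ 1. -/
/-!
The restriction of `τ` to `K(i)` is the nontrivial automorphism of this quadratic extension and
inverts every 2-power root of unity `ζ`, so `N(ζ) = ζ · ζ⁻¹ = 1`. For a primitive `2^j`-th root of
unity `ζ` in a cyclic 2-extension `L`, the group `Gal(K(ζ)/K)` is a cyclic quotient of `Gal(L/K)`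
embedded in `(ℤ/2^j)ˣ`, and it contains the restriction of `τ`, which maps to `-1`. If its order
were divisible by 4, this involution would be a square in the cyclic group, but `-1` is not a
square modulo 4.
-/

open IntermediateField Polynomial

theorem IsCyclic.isSquare_of_sq_eq_one {G : Type*} [Group G] [Finite G] [IsCyclic G] {c : G}
    (hc : c ^ 2 = 1) (h4 : 4 ∣ Nat.card G) : IsSquare c := by
  obtain ⟨g, hg⟩ := IsCyclic.exists_generator (α := G)
  obtain ⟨t, rfl⟩ := mem_powers_iff_mem_zpowers.mpr (hg c)
  have ht : Nat.card G ∣ t * 2 := by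
    rw [← orderOf_eq_card_of_forall_mem_zpowers hg, orderOf_dvd_iff_pow_eq_one, pow_mul, hc]
  obtain ⟨s, rfl⟩ : 2 ∣ t := by have := h4.trans ht; omega
  exact ⟨g ^ s, by rw [← pow_add, two_mul]⟩

theorem ZMod.not_isSquare_neg_one_units {n : ℕ} (hn : 4 ∣ n) : ¬ IsSquare (-1 : (ZMod n)ˣ) := by
  intro h
  have hneg : ZMod.unitsMap hn (-1) = -1 := Units.ext (by simp [ZMod.unitsMap_def])
  have h4 := hneg ▸ h.map (ZMod.unitsMap hn)
  revert h4
  decide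

theorem IsPrimitiveRoot.autToPow_eq_neg_one {R S : Type*} [CommRing R] [Field S] [Algebra R S]
    {μ : S} {n : ℕ} [NeZero n] (hμ : IsPrimitiveRoot μ n) {σ : S ≃ₐ[R] S} (hσ : σ μ = μ⁻¹) :
    hμ.autToPow R σ = -1 := by
  have hpow : μ ^ ((hμ.autToPow R σ : ZMod n).val + 1) = 1 := by
    rw [pow_succ, autToPow_spec R hμ σ, hσ, inv_mul_cancel₀ (hμ.ne_zero (NeZero.ne n))]
  have hzero := (ZMod.natCast_eq_zero_iff _ _).mpr (hμ.dvd_of_pow_eq_one _ hpow)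
  push_cast at hzero
  rw [ZMod.natCast_val, ZMod.cast_id] at hzero
  exact Units.ext (eq_neg_of_add_eq_zero_left hzero)

theorem two_ne_zero_of_not_exists_sq_eq_neg_one
    {K : Type*} [Field K] (hK : ¬ ∃ x : K, x ^ 2 = -1) : (2 : K) ≠ 0 :=
  fun h ↦ hK ⟨1, by linear_combination h⟩

theorem isPrimitiveRoot_of_sq_eq_neg_one {R : Type*} [CommRing R] (h2 : (2 : R) ≠ 0) {i : R}
    (hi : i ^ 2 = -1) : IsPrimitiveRoot i (2 ^ 2) :=
  orderOf_eq_prime_pow (p := 2) (n := 1) (fun h ↦ h2 (by linear_combination hi - h))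
    (by linear_combination (i ^ 2 - 1) * hi) ▸ IsPrimitiveRoot.orderOf i

theorem Algebra.algebraMap_norm_eq_mul_of_finrank_eq_two {K E : Type*} [Field K] [Field E]
    [Algebra K E] [IsGalois K E] (hE : Module.finrank K E = 2) {σ : Gal(E/K)} (hσ : σ ≠ 1)
    (x : E) : algebraMap K E (Algebra.norm K x) = x * σ x := by
  have : FiniteDimensional K E := Module.finite_of_finrank_eq_succ hE
  classical
  have huniv : ({1, σ} : Finset Gal(E/K)) = Finset.univ := by
    refine Finset.eq_univ_of_card _ ?_
    rw [Finset.card_pair hσ.symm, ← Nat.card_eq_fintype_card, IsGalois.card_aut_eq_finrank, hE]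
  rw [Algebra.norm_eq_prod_automorphisms, ← huniv, Finset.prod_pair hσ.symm, AlgEquiv.one_apply]

theorem finrank_adjoin_eq_two_of_sq_eq_neg_one {K Ω : Type*} [Field K] [Field Ω] [Algebra K Ω]
    (hK : ¬ ∃ x : K, x ^ 2 = -1) {i : Ω} (hi : i ^ 2 = -1) : Module.finrank K K⟮i⟯ = 2 := by
  have hirr : Irreducible (X ^ 2 - C (-1 : K)) :=
    X_pow_sub_C_irreducible_of_prime Nat.prime_two fun b hb ↦ hK ⟨b, hb⟩
  have hroot : aeval i (X ^ 2 - C (-1 : K)) = 0 := by simp [hi]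
  have hmonic : (X ^ 2 - C (-1 : K)).Monic := monic_X_pow_sub_C _ two_ne_zero
  rw [adjoin.finrank ⟨_, hmonic, hroot⟩, ← minpoly.eq_of_irreducible_of_monic hirr hroot hmonic,
    natDegree_X_pow_sub_C]

section RootOfUnity

variable {K Ω : Type*} [Field K] [Field Ω] [Algebra K Ω]

theorem AlgEquiv.restrictNormal_apply_eq_inv {τ : Ω ≃ₐ[K] Ω}
    (hτ : ∀ ζ : Ω, ζ ≠ 0 → (∃ k : ℕ, ζ ^ (2 ^ k) = 1) → τ ζ = ζ⁻¹)
    (E : IntermediateField K Ω) [Normal K E] {x : E} (hx : ∃ k : ℕ, x ^ (2 ^ k) = 1) :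
    τ.restrictNormal E x = x⁻¹ := by
  obtain ⟨k, hk⟩ := hx
  have hx0 : x ≠ 0 := by rintro rfl; simp at hk
  apply (algebraMap E Ω).injective
  rw [AlgEquiv.restrictNormal_commutes, map_inv₀]
  exact hτ _ ((_root_.map_ne_zero _).mpr hx0) ⟨k, by rw [← map_pow, hk, map_one]⟩

theorem IntermediateField.isCyclic_of_le {E L : IntermediateField K Ω} (h : E ≤ L) [Normal K E]
    [Normal K L] [IsCyclic Gal(L/K)] : IsCyclic Gal(E/K) := by
  let _ : Algebra E L := (inclusion h).toAlgebra
  have : IsScalarTower K E L := .of_algebraMap_eq' rfl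
  exact isCyclic_of_surjective _ (AlgEquiv.restrictNormalHom_surjective (F := K) (K₁ := E) L)

variable [Algebra.IsAlgebraic K Ω] {ζ : Ω} {n : ℕ} [NeZero (n : K)]

theorem IsPrimitiveRoot.isGalois_adjoin (hζ : IsPrimitiveRoot ζ n) : IsGalois K K⟮ζ⟯ := by
  have := NeZero.of_neZero_natCast K (n := n)
  have := hζ.intermediateField_adjoin_isCyclotomicExtension K
  exact IsCyclotomicExtension.isGalois {n} K _

theorem IsPrimitiveRoot.finrank_adjoin_le_totient (hζ : IsPrimitiveRoot ζ n) :
    Module.finrank K K⟮ζ⟯ ≤ n.totient := by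
  have := NeZero.of_neZero_natCast K (n := n)
  have := hζ.intermediateField_adjoin_isCyclotomicExtension K
  have := hζ.isGalois_adjoin (K := K)
  have := IsCyclotomicExtension.finiteDimensional {n} K K⟮ζ⟯
  have hgen : IsPrimitiveRoot (AdjoinSimple.gen K ζ) n := coe_submonoidClass_iff.mp hζ
  rw [← IsGalois.card_aut_eq_finrank, ← ZMod.card_units_eq_totient, ← Nat.card_eq_fintype_card]
  exact Nat.card_le_card_of_injective _ (hgen.autToPow_injective K)

theorem IsPrimitiveRoot.not_four_dvd_finrank_adjoin {j : ℕ} [NeZero ((2 ^ j : ℕ) : K)]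
    (hζ : IsPrimitiveRoot ζ (2 ^ j)) [IsCyclic Gal(K⟮ζ⟯/K)] {σ : Gal(K⟮ζ⟯/K)}
    (hσ : σ (AdjoinSimple.gen K ζ) = (AdjoinSimple.gen K ζ)⁻¹) :
    ¬ 4 ∣ Module.finrank K K⟮ζ⟯ := by
  intro h4
  have := NeZero.of_neZero_natCast K (n := 2 ^ j)
  have := hζ.intermediateField_adjoin_isCyclotomicExtension K
  have := hζ.isGalois_adjoin (K := K)
  have := IsCyclotomicExtension.finiteDimensional {2 ^ j} K K⟮ζ⟯
  have hgen : IsPrimitiveRoot (AdjoinSimple.gen K ζ) (2 ^ j) := coe_submonoidClass_iff.mp hζ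
  have hσ' : hgen.autToPow K σ = -1 := hgen.autToPow_eq_neg_one hσ
  have hσ2 : σ ^ 2 = 1 := hgen.autToPow_injective K (by rw [map_pow, hσ', map_one, neg_one_sq])
  have hcard : 4 ∣ Nat.card Gal(K⟮ζ⟯/K) := IsGalois.card_aut_eq_finrank K K⟮ζ⟯ ▸ h4
  have hj : 4 ∣ 2 ^ j := by
    have h4j : 2 ^ 2 ≤ 2 ^ j := (Nat.le_of_dvd Module.finrank_pos h4).trans
      (hζ.finrank_adjoin_le_totient.trans (Nat.totient_le _))
    exact pow_dvd_pow 2 ((Nat.pow_le_pow_iff_right one_lt_two).mp h4j)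
  exact ZMod.not_isSquare_neg_one_units hj (hσ' ▸ (IsCyclic.isSquare_of_sq_eq_one hσ2 hcard).map _)

theorem norm_eq_one_of_pow_two_pow_eq_one (hK : ¬ ∃ x : K, x ^ 2 = -1) {i : Ω} (hi : i ^ 2 = -1)
    {τ : Ω ≃ₐ[K] Ω} (hτ : ∀ ζ : Ω, ζ ≠ 0 → (∃ k : ℕ, ζ ^ (2 ^ k) = 1) → τ ζ = ζ⁻¹)
    {ζ : K⟮i⟯} (hζ : ∃ k : ℕ, ζ ^ (2 ^ k) = 1) : Algebra.norm K ζ = 1 := by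
  have h2 := two_ne_zero_of_not_exists_sq_eq_neg_one hK
  have : NeZero ((2 ^ 2 : ℕ) : K) := ⟨by exact_mod_cast pow_ne_zero 2 h2⟩
  have hprim := isPrimitiveRoot_of_sq_eq_neg_one
    (map_ofNat (algebraMap K Ω) 2 ▸ (_root_.map_ne_zero _).mpr h2) hi
  have := hprim.isGalois_adjoin (K := K)
  have hgen : IsPrimitiveRoot (AdjoinSimple.gen K i) (2 ^ 2) :=
    IsPrimitiveRoot.coe_submonoidClass_iff.mp hprim
  have hσ {x : K⟮i⟯} (hx : ∃ k : ℕ, x ^ 2 ^ k = 1) := τ.restrictNormal_apply_eq_inv hτ K⟮i⟯ hx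
  have hσ1 : τ.restrictNormal K⟮i⟯ ≠ 1 := by
    intro h
    have hinv := hσ ⟨2, hgen.pow_eq_one⟩
    rw [h, AlgEquiv.one_apply] at hinv
    have hsq := (mul_eq_one_iff_eq_inv₀ (hgen.ne_zero (by norm_num))).mpr hinv
    have := (hgen.pow_eq_one_iff_dvd 2).mp (by rw [sq]; exact hsq)
    norm_num at this
  have hfr : Module.finrank K K⟮i⟯ = 2 := finrank_adjoin_eq_two_of_sq_eq_neg_one hK hi
  have hζ0 : ζ ≠ 0 := by obtain ⟨k, hk⟩ := hζ; rintro rfl; simp at hk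
  apply (algebraMap K K⟮i⟯).injective
  rw [Algebra.algebraMap_norm_eq_mul_of_finrank_eq_two (E := K⟮i⟯) hfr hσ1, hσ hζ,
    mul_inv_cancel₀ hζ0, map_one]

theorem finrank_adjoin_le_two_of_isCyclic (h2 : (2 : K) ≠ 0) {τ : Ω ≃ₐ[K] Ω}
    (hτ : ∀ ζ : Ω, ζ ≠ 0 → (∃ k : ℕ, ζ ^ (2 ^ k) = 1) → τ ζ = ζ⁻¹)
    {L : IntermediateField K Ω} [IsGalois K L] [IsCyclic Gal(L/K)]
    (hL : ∃ n : ℕ, Module.finrank K L = 2 ^ n) {ζ : Ω} (hζL : ζ ∈ L)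
    (hζ : ∃ k : ℕ, ζ ^ (2 ^ k) = 1) : Module.finrank K K⟮ζ⟯ ≤ 2 := by
  obtain ⟨n, hn⟩ := hL
  obtain ⟨k, hk⟩ := hζ
  obtain ⟨j, -, hj⟩ := (Nat.dvd_prime_pow Nat.prime_two).mp (orderOf_dvd_of_pow_eq_one hk)
  have hprim : IsPrimitiveRoot ζ (2 ^ j) := hj ▸ IsPrimitiveRoot.orderOf ζ
  have : NeZero ((2 ^ j : ℕ) : K) := ⟨by exact_mod_cast pow_ne_zero j h2⟩
  have := hprim.isGalois_adjoin (K := K)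
  have hle : K⟮ζ⟯ ≤ L := adjoin_simple_le_iff.mpr hζL
  have := isCyclic_of_le hle
  have hgen : IsPrimitiveRoot (AdjoinSimple.gen K ζ) (2 ^ j) :=
    IsPrimitiveRoot.coe_submonoidClass_iff.mp hprim
  have h4 := hprim.not_four_dvd_finrank_adjoin
    (τ.restrictNormal_apply_eq_inv hτ K⟮ζ⟯ ⟨j, hgen.pow_eq_one⟩)
  obtain ⟨m, -, hm⟩ := (Nat.dvd_prime_pow Nat.prime_two).mp (hn ▸ finrank_dvd_of_le_right hle)
  rw [hm] at h4 ⊢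
  rcases m with _ | _ | m
  · simp
  · simp
  · exact (h4 (Dvd.intro_left (2 ^ m) (by ring))).elim

end RootOfUnity

theorem stmt7_general (K : Type*) [Field K]
    (hi : ¬ ∃ x : K, x ^ 2 = -1)
    (i : AlgebraicClosure K) (hisq : i ^ 2 = -1)
    (hnotpro : ∃ τ : AlgebraicClosure K ≃ₐ[K] AlgebraicClosure K,
      ∀ ζ : AlgebraicClosure K, ζ ≠ 0 → (∃ k : ℕ, ζ ^ (2 ^ k) = 1) → τ ζ = ζ⁻¹) :
    (∀ ζ : K⟮i⟯, (∃ k : ℕ, ζ ^ (2 ^ k) = 1) → Algebra.norm K ζ = 1) ∧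
    (∀ L : IntermediateField K (AlgebraicClosure K), IsGalois K L →
      IsCyclic (L ≃ₐ[K] L) → (∃ nL : ℕ, Module.finrank K L = 2 ^ nL) →
      ∀ ζ : AlgebraicClosure K, ζ ∈ L → (∃ k : ℕ, ζ ^ (2 ^ k) = 1) →
        Module.finrank K K⟮ζ⟯ ≤ 2) := by
  obtain ⟨τ, hτ⟩ := hnotpro
  exact ⟨fun ζ hζ ↦ norm_eq_one_of_pow_two_pow_eq_one hi hisq hτ hζ,
    fun L _ _ hL ζ hζL hζ ↦ finrank_adjoin_le_two_of_isCyclic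
      (two_ne_zero_of_not_exists_sq_eq_neg_one hi) hτ hL hζL hζ⟩

/-- Lemma (3.3.1), special case 2: `K` a 2-adic field with `i ∉ K` and
`Gal(K[μ_{2^∞}]/K)` not procyclic (it contains the inversion `φ⁻¹(-1)`).  Then
every 2-power root of unity `ζ ∈ μ_{K(i)}` has `N_{K(i)/K}(ζ) = 1`, and any
cyclic 2-extension `L/K` can only contain a cyclotomic subextension
`K_m = K(ζ)` of degree `2^m` with `m ≤ 1`. -/
theorem stmt7 (K : Type*) [Field K] [Algebra ℚ_[2] K] [FiniteDimensional ℚ_[2] K]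
    (hμK : ∀ ζ : K, (∃ k : ℕ, ζ ^ (2 ^ k) = 1) → ζ = 1 ∨ ζ = -1)
    (hi : ¬ ∃ x : K, x ^ 2 = -1)
    (i : AlgebraicClosure K) (hisq : i ^ 2 = -1)
    (hnotpro : ∃ τ : AlgebraicClosure K ≃ₐ[K] AlgebraicClosure K,
      ∀ ζ : AlgebraicClosure K, ζ ≠ 0 → (∃ k : ℕ, ζ ^ (2 ^ k) = 1) → τ ζ = ζ⁻¹) :
    (∀ ζ : K⟮i⟯, (∃ k : ℕ, ζ ^ (2 ^ k) = 1) → Algebra.norm K ζ = 1) ∧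
    (∀ L : IntermediateField K (AlgebraicClosure K), IsGalois K L →
      IsCyclic (L ≃ₐ[K] L) → (∃ nL : ℕ, Module.finrank K L = 2 ^ nL) →
      ∀ ζ : AlgebraicClosure K, ζ ∈ L → (∃ k : ℕ, ζ ^ (2 ^ k) = 1) →
        Module.finrank K K⟮ζ⟯ ≤ 2) :=
  stmt7_general K hi i hisq hnotpro
end

section
/- Let F = K(i) with K a 2-adic field, i ∉ K, μ_F = μ_{2^l} generated by ξ_F, and set θ such that N_{F/K}(1-ξ_F) = 2 - 2cos θ formally (i.e. N(1-ξ_F) = (1-ξ_F)(1-ξ_F^{-1})). Then none of -1, N(1-ξ_F), and -N(1-ξ_F) is a square in K^×. -/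
/-! Since `(1 - ξ)(1 - ξ⁻¹) = -(1 - ξ)² / ξ`, a square root of `-ν` in `F` (or of `ν`, multiplied
by `i`) yields a square root of `ξ`, and a square root of a primitive `2^l`-th root of unity is a
primitive `2^(l+1)`-th root of unity, which `F` does not contain. -/

theorem IsPrimitiveRoot.of_pow_prime {M : Type*} [CommMonoid M] {p n : ℕ} [Fact p.Prime]
    {ζ : M} (hn : n ≠ 0) (h : IsPrimitiveRoot (ζ ^ p) (p ^ n)) :
    IsPrimitiveRoot ζ (p ^ (n + 1)) := by
  obtain ⟨m, rfl⟩ := Nat.exists_eq_succ_of_ne_zero hn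
  have hp := (Fact.out : p.Prime)
  rw [← orderOf_eq_prime_pow (x := ζ) (n := m + 1)]
  · exact IsPrimitiveRoot.orderOf ζ
  · rw [pow_succ', pow_mul]
    exact h.pow_ne_one_of_pos_of_lt (pow_ne_zero m hp.ne_zero)
      (pow_lt_pow_right₀ hp.one_lt m.lt_succ_self)
  · rw [pow_succ', pow_mul, h.pow_eq_one]

theorem sq_div_eq_of_sq_eq_neg_mul_one_sub_inv {F : Type*} [Field F] {ξ c : F} (hξ0 : ξ ≠ 0)
    (hξ1 : ξ ≠ 1) (hc : c ^ 2 = -((1 - ξ) * (1 - ξ⁻¹))) : ((1 - ξ) / c) ^ 2 = ξ := by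
  have h1ξ : 1 - ξ ≠ 0 := sub_ne_zero.mpr hξ1.symm
  have hc' : c ^ 2 = (1 - ξ) ^ 2 / ξ := by rw [hc]; field_simp; ring
  have hc0 : c ≠ 0 := by rintro rfl; simp_all
  rw [div_pow, hc']
  field_simp

theorem stmt10_general (K F : Type*) [Field K]
    [Field F] [Algebra K F]
    (hi : ¬ ∃ x : K, x ^ 2 = -1)
    (i : F) (hisq : i ^ 2 = -1)
    (l : ℕ) (hl : 2 ≤ l)
    (ξF : F) (hξF : IsPrimitiveRoot ξF (2 ^ l))
    (hμmax : ¬ ∃ ζ : F, IsPrimitiveRoot ζ (2 ^ (l + 1)))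
    (ν : K) (hν : algebraMap K F ν = (1 - ξF) * (1 - ξF⁻¹)) :
    (¬ ∃ s : K, s ^ 2 = -1) ∧ (¬ ∃ s : K, s ^ 2 = ν) ∧ (¬ ∃ s : K, s ^ 2 = -ν) := by
  have hξ0 : ξF ≠ 0 := hξF.ne_zero (by positivity)
  have hξ1 : ξF ≠ 1 := hξF.ne_one (Nat.one_lt_two_pow (by omega))
  have no_sqrt (c : F) (hc : c ^ 2 = -((1 - ξF) * (1 - ξF⁻¹))) : False := by
    refine hμmax ⟨(1 - ξF) / c, IsPrimitiveRoot.of_pow_prime (by omega) ?_⟩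
    rwa [sq_div_eq_of_sq_eq_neg_mul_one_sub_inv hξ0 hξ1 hc]
  refine ⟨hi, ?_, ?_⟩
  · rintro ⟨s, hs⟩
    exact no_sqrt (i * algebraMap K F s) (by rw [mul_pow, hisq, ← map_pow, hs, hν, neg_one_mul])
  · rintro ⟨s, hs⟩
    exact no_sqrt (algebraMap K F s) (by rw [← map_pow, hs, map_neg, hν])

/-- Lemma (3.6.9): `F = K(i)` over a 2-adic field `K` with `i ∉ K`,
`μ_F = μ_{2^l}` generated by `ξ_F` (`l ≥ 2`, `σ(ξ_F) = ξ_F⁻¹`), and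
`N(1-ξ_F) = (1-ξ_F)(1-ξ_F⁻¹) = 2 - 2cos θ ∈ K`.  Then none of `-1`,
`N(1-ξ_F)` and `-N(1-ξ_F)` is a square in `K^×`. -/
theorem stmt10 (K F : Type*) [Field K] [Algebra ℚ_[2] K] [FiniteDimensional ℚ_[2] K]
    [Field F] [Algebra K F] (hdeg : Module.finrank K F = 2)
    (hi : ¬ ∃ x : K, x ^ 2 = -1)
    (i : F) (hisq : i ^ 2 = -1)
    (σ : F ≃ₐ[K] F) (hσ : σ ≠ AlgEquiv.refl)
    (l : ℕ) (hl : 2 ≤ l)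
    (ξF : F) (hξF : IsPrimitiveRoot ξF (2 ^ l))
    (hinv : σ ξF = ξF⁻¹)
    (hμmax : ¬ ∃ ζ : F, IsPrimitiveRoot ζ (2 ^ (l + 1)))
    (ν : K) (hν : algebraMap K F ν = (1 - ξF) * (1 - ξF⁻¹)) :
    (¬ ∃ s : K, s ^ 2 = -1) ∧ (¬ ∃ s : K, s ^ 2 = ν) ∧ (¬ ∃ s : K, s ^ 2 = -ν) :=
  stmt10_general K F hi i hisq l hl ξF hξF hμmax ν hν
end

section
/- Let G = Z/p^nZ with generator σ, and let W = ⟨X,S,T⟩/⟨S^P X^Q T^R⟩ be the Z_p[G]-module which is the quotient of Z_p ⊕ Z_p[G] ⊕ Z_p[G] (with σ acting trivially on the first factor) by the cyclic submodule generated by the single relation S^P X^Q T^R = 1, for P, Q, R ∈ Z_p[G]. If P(ξ) ≠ 0 for all p^n-th roots of unity ξ, then the character of Q_p ⊗ W equals χ_reg + 1. -/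
/-! Since `P` has no zero at the `p^n`-th roots of unity, it is coprime to `X^{p^n} - 1` and
hence a unit of `ℚ_p[G]`. The relation can therefore be solved for the `S`-coordinate, and
`ℚ_p ⊗ W` is the sum of the two remaining factors: the trivial module `ℚ_p` and `ℚ_p[G]`. -/

open Polynomial

set_option synthInstance.maxHeartbeats 1000000
set_option maxHeartbeats 1000000

noncomputable section

/-- The ideal `(X^{p^n} - 1)` of `ℚ_p[X]`. -/
def Ig (p n : ℕ) [Fact p.Prime] : Ideal (Polynomial ℚ_[p]) :=
  Ideal.span {(X : Polynomial ℚ_[p]) ^ p ^ n - 1}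

/-- The group ring `ℚ_p[G] ≅ ℚ_p[X]/(X^{p^n}-1)` for `G = ℤ/p^nℤ`. -/
abbrev GQ (p n : ℕ) [Fact p.Prime] := Polynomial ℚ_[p] ⧸ Ig p n

/-- The ideal `(σ - 1)` of `ℚ_p[G]`. -/
def I0 (p n : ℕ) [Fact p.Prime] : Ideal (GQ p n) :=
  Ideal.span {Ideal.Quotient.mk (Ig p n) ((X : Polynomial ℚ_[p]) - 1)}

/-- The trivial `ℚ_p[G]`-module `ℚ_p ≅ ℚ_p[G]/(σ - 1)`. -/
abbrev G0Q (p n : ℕ) [Fact p.Prime] := GQ p n ⧸ I0 p n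

/-- The free module `M ⊗ ℚ_p = ℚ_p·X ⊕ ℚ_p[G]·S ⊕ ℚ_p[G]·T`
(with `σ` acting trivially on the first factor). -/
abbrev MQ (p n : ℕ) [Fact p.Prime] := G0Q p n × GQ p n × GQ p n

/-- The relation `q = S^P X^Q T^R` (written additively: `X`-component `Q`,
`S`-component `P`, `T`-component `R`), with `P, Q, R ∈ ℤ_p[G]` mapped into `ℚ_p[G]`. -/
def qQ (p n : ℕ) [Fact p.Prime] (P Q R : Polynomial ℤ_[p]) : MQ p n :=
  (Ideal.Quotient.mk (I0 p n)
      (Ideal.Quotient.mk (Ig p n) (Polynomial.map PadicInt.Coe.ringHom Q)),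
   Ideal.Quotient.mk (Ig p n) (Polynomial.map PadicInt.Coe.ringHom P),
   Ideal.Quotient.mk (Ig p n) (Polynomial.map PadicInt.Coe.ringHom R))

/-- `ℚ_p ⊗ W` where `W = ⟨X,S,T⟩/⟨S^P X^Q T^R⟩`. -/
abbrev WQ (p n : ℕ) [Fact p.Prime] (P Q R : Polynomial ℤ_[p]) :=
  MQ p n ⧸ Submodule.span (GQ p n) {qQ p n P Q R}

theorem IsCoprime.isUnit_quotient_mk_span {R : Type*} [CommRing R] {f g : R}
    (h : IsCoprime f g) : IsUnit (Ideal.Quotient.mk (Ideal.span {g}) f) := by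
  obtain ⟨a, b, hab⟩ := h
  refine .of_mul_eq_one (Ideal.Quotient.mk _ a) ?_
  rw [← map_mul, ← map_one (Ideal.Quotient.mk _), Ideal.Quotient.eq, mul_comm,
    ← hab, sub_add_cancel_left]
  exact neg_mem (Ideal.mul_mem_left _ b (Ideal.mem_span_singleton_self g))

theorem Polynomial.isUnit_quotient_mk_span_of_aeval_ne_zero {k : Type*} (K : Type*) [Field k]
    [Field K] [IsAlgClosed K] [Algebra k K] {f g : k[X]}
    (h : ∀ a : K, aeval a g = 0 → aeval a f ≠ 0) :
    IsUnit (Ideal.Quotient.mk (Ideal.span {g}) f) :=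
  IsCoprime.isUnit_quotient_mk_span <|
    (isCoprime_iff_aeval_ne_zero_of_isAlgClosed k K f g).mpr fun a =>
      or_iff_not_imp_right.mpr fun hg => h a (not_not.mp hg)

section QuotSpanSingleton

variable {A N L : Type*} [CommRing A] [AddCommGroup N] [Module A N] [AddCommGroup L] [Module A L]

/-- The projection of `N × A × L` onto `N × L` along the line through `(x, u, y)`. -/
def projAlongOfUnit (u : Aˣ) (x : N) (y : L) : N × A × L →ₗ[A] N × L :=
  let c : N × A × L →ₗ[A] A := (↑u⁻¹ : A) • (LinearMap.fst A A L ∘ₗ LinearMap.snd A N (A × L))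
  (LinearMap.fst A N (A × L) - c.smulRight x).prod
    (LinearMap.snd A A L ∘ₗ LinearMap.snd A N (A × L) - c.smulRight y)

theorem projAlongOfUnit_apply (u : Aˣ) (x : N) (y : L) (m : N × A × L) :
    projAlongOfUnit u x y m = (m.1 - (↑u⁻¹ * m.2.1) • x, m.2.2 - (↑u⁻¹ * m.2.1) • y) := rfl

theorem projAlongOfUnit_surjective (u : Aˣ) (x : N) (y : L) :
    Function.Surjective (projAlongOfUnit u x y) :=
  fun z => ⟨(z.1, 0, z.2), by simp [projAlongOfUnit_apply]⟩

theorem ker_projAlongOfUnit (u : Aˣ) (x : N) (y : L) :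
    LinearMap.ker (projAlongOfUnit u x y) = Submodule.span A {(x, (u : A), y)} := by
  apply le_antisymm
  · intro m hm
    rw [LinearMap.mem_ker, projAlongOfUnit_apply, Prod.mk_eq_zero, sub_eq_zero,
      sub_eq_zero] at hm
    refine Submodule.mem_span_singleton.mpr ⟨↑u⁻¹ * m.2.1, ?_⟩
    ext
    · exact hm.1.symm
    · simp [mul_comm _ (u : A), ← mul_assoc]
    · exact hm.2.symm
  · simp [Submodule.span_le, projAlongOfUnit_apply]

def quotSpanSingletonEquivOfUnit (u : Aˣ) (x : N) (y : L) :
    ((N × A × L) ⧸ Submodule.span A {((x, (u : A), y) : N × A × L)}) ≃ₗ[A] N × L :=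
  (Submodule.quotEquivOfEq _ _ (ker_projAlongOfUnit u x y).symm).trans
    ((projAlongOfUnit u x y).quotKerEquivOfSurjective (projAlongOfUnit_surjective u x y))

end QuotSpanSingleton

theorem stmt11_general (p n : ℕ) [Fact p.Prime] (P Q R : Polynomial ℤ_[p])
    (hP : ∀ ξ : AlgebraicClosure ℚ_[p], ξ ^ p ^ n = 1 →
      Polynomial.eval₂
        ((algebraMap ℚ_[p] (AlgebraicClosure ℚ_[p])).comp PadicInt.Coe.ringHom)
        ξ P ≠ 0) :
    Nonempty (WQ p n P Q R ≃ₗ[GQ p n] G0Q p n × GQ p n) := by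
  have hunit : IsUnit (Ideal.Quotient.mk (Ig p n) (P.map PadicInt.Coe.ringHom)) :=
    isUnit_quotient_mk_span_of_aeval_ne_zero (AlgebraicClosure ℚ_[p]) fun ξ hξ => by
      rw [aeval_def, eval₂_map]
      exact hP ξ (by simpa [sub_eq_zero] using hξ)
  exact ⟨quotSpanSingletonEquivOfUnit hunit.unit _ _⟩

/-- If `P(ξ) ≠ 0` for every `p^n`-th root of unity `ξ`, then the character of
`ℚ_p ⊗ W`, where `W = ⟨X,S,T⟩/⟨S^P X^Q T^R⟩` over `ℤ_p[G]`, equals `χ_reg + 1`,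
i.e. `ℚ_p ⊗ W ≅ ℚ_p[G] ⊕ (trivial)` as `ℚ_p[G]`-modules. -/
theorem stmt11 (p n : ℕ) [Fact p.Prime] (hn : 1 ≤ n) (P Q R : Polynomial ℤ_[p])
    (hP : ∀ ξ : AlgebraicClosure ℚ_[p], ξ ^ p ^ n = 1 →
      Polynomial.eval₂
        ((algebraMap ℚ_[p] (AlgebraicClosure ℚ_[p])).comp PadicInt.Coe.ringHom)
        ξ P ≠ 0) :
    Nonempty (WQ p n P Q R ≃ₗ[GQ p n] G0Q p n × GQ p n) :=
  stmt11_general p n P Q R hP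

end
end
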